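/- Let η, ν be skew-symmetric 3×3 matrices with ‖η‖₂ < 1 and ‖ν‖₂ < 1, and let η̇, ν̇ be skew-symmetric matrices. With D_X Cay(Y) = −Y(I+X)⁻¹ − (I−X)(I+X)⁻¹ Y (I+X)⁻¹ denoting the derivative of the Cayley transform, if additionally ‖ν‖₂ + ‖ν − η‖₂ < 1, then ‖D_η Cay(η̇) − D_ν Cay(ν̇)‖₂ ≤ C_a ‖η − ν‖₂ + C_b ‖η̇ − ν̇‖₂, where C_b = 1 + (1 − ‖ν‖₂)⁻¹ and C_a = (1 − ‖ν‖₂ − ‖ν−η‖₂)⁻¹ (‖η̇‖₂(1−‖η‖₂)⁻¹ + ‖ν̇‖₂(1−‖ν‖₂)⁻¹) + C_Φ ‖ν̇‖₂ with C_Φ the Lipschitz constant of Cay from the chart conditioning estimate. -/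

import Mathlib

open scoped Matrix.Norms.L2Operator

/-- The derivative of the Cayley transform at `X` in direction `Y`:
`D_X Cay(Y) = −Y(I+X)⁻¹ − (I−X)(I+X)⁻¹ Y (I+X)⁻¹`. -/
noncomputable def DCay (X Y : Matrix (Fin 3) (Fin 3) ℝ) : Matrix (Fin 3) (Fin 3) ℝ :=
  -(Y * (1 + X)⁻¹) - (1 - X) * (1 + X)⁻¹ * Y * (1 + X)⁻¹

/-! Write `A = (1 + η)⁻¹` and `B = (1 + ν)⁻¹`. The difference `D_η Cay(η̇) − D_ν Cay(ν̇)` splits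
into five products, each containing one of `η̇ − ν̇`, `A − B = A (ν − η) B` or `Cay η − Cay ν`.
Skew-adjointness makes `Cay η` unitary, and since `1 + Cay η = 2A` this gives `‖A‖ ≤ 1`; the Neumann
series gives `‖A‖ ≤ (1 − ‖η‖)⁻¹`; and `‖η‖ ≤ ‖ν‖ + ‖ν − η‖` lets `(1 − ‖ν‖ − ‖ν − η‖)⁻¹` dominate
both `(1 − ‖η‖)⁻¹` and `(1 − ‖ν‖)⁻¹`. -/

open scoped Ring

section NormedRing

variable {R : Type*} [NormedRing R] [HasSummableGeomSeries R]

lemma isUnit_one_add_of_norm_lt_one {X : R} (h : ‖X‖ < 1) : IsUnit (1 + X) := by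
  simpa using isUnit_one_sub_of_norm_lt_one (x := -X) (by simpa using h)

lemma norm_ringInverse_one_add_le [NormOneClass R] {X : R} (h : ‖X‖ < 1) :
    ‖(1 + X)⁻¹ʳ‖ ≤ (1 - ‖X‖)⁻¹ := by
  have h' : ‖-X‖ < 1 := by simpa using h
  have := tsum_geometric_le_of_norm_lt_one (-X) h'
  rwa [geom_series_eq_inverse _ h', sub_neg_eq_add, norm_one, sub_self, zero_add,
    norm_neg] at this

lemma norm_ringInverse_one_add_sub_le {X X' : R} (h : ‖X‖ < 1) (h' : ‖X'‖ < 1) :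
    ‖(1 + X)⁻¹ʳ - (1 + X')⁻¹ʳ‖ ≤ ‖(1 + X)⁻¹ʳ‖ * ‖X - X'‖ * ‖(1 + X')⁻¹ʳ‖ := by
  rw [Ring.inverse_sub_inverse (iff_of_true (isUnit_one_add_of_norm_lt_one h)
    (isUnit_one_add_of_norm_lt_one h')), add_sub_add_left_eq_sub, norm_sub_rev X]
  exact norm_mul₃_le

end NormedRing

noncomputable def cayley {R : Type*} [Ring R] (X : R) : R := (1 - X) * (1 + X)⁻¹ʳ

noncomputable def cayleyDeriv {R : Type*} [Ring R] (X Y : R) : R :=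
  -(Y * (1 + X)⁻¹ʳ) - cayley X * Y * (1 + X)⁻¹ʳ

lemma norm_cayleyDeriv_sub_le {R : Type*} [NormedRing R] (X X' Y Y' : R) :
    ‖cayleyDeriv X Y - cayleyDeriv X' Y'‖ ≤
      ‖Y - Y'‖ * ‖(1 + X)⁻¹ʳ‖ + ‖Y'‖ * ‖(1 + X)⁻¹ʳ - (1 + X')⁻¹ʳ‖
        + ‖cayley X‖ * ‖Y‖ * ‖(1 + X)⁻¹ʳ - (1 + X')⁻¹ʳ‖
        + ‖cayley X‖ * ‖Y - Y'‖ * ‖(1 + X')⁻¹ʳ‖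
        + ‖cayley X - cayley X'‖ * ‖Y'‖ * ‖(1 + X')⁻¹ʳ‖ := by
  set A := (1 + X)⁻¹ʳ
  set B := (1 + X')⁻¹ʳ
  have decomp : cayleyDeriv X Y - cayleyDeriv X' Y' =
      -((Y - Y') * A) - Y' * (A - B) - cayley X * Y * (A - B) - cayley X * (Y - Y') * B
        - (cayley X - cayley X') * Y' * B := by
    simp only [cayleyDeriv]
    noncomm_ring
  rw [decomp]
  refine (norm_sub_le _ _).trans (add_le_add ?_ norm_mul₃_le)
  refine (norm_sub_le _ _).trans (add_le_add ?_ norm_mul₃_le)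
  refine (norm_sub_le _ _).trans (add_le_add ?_ norm_mul₃_le)
  refine (norm_sub_le _ _).trans (add_le_add ?_ (norm_mul_le _ _))
  exact (norm_neg _).trans_le (norm_mul_le _ _)

lemma cayley_mem_unitary {R : Type*} [Ring R] [StarRing R] {X : R} (hX : star X = -X)
    (hadd : IsUnit (1 + X)) (hsub : IsUnit (1 - X)) : cayley X ∈ unitary R := by
  have hcomm : (1 + X) * (1 - X) = (1 - X) * (1 + X) := by noncomm_ring
  have hstar : star (cayley X) = (1 - X)⁻¹ʳ * (1 + X) := by
    rw [cayley, star_mul, ← Ring.inverse_star, star_add, star_sub, star_one, hX, sub_neg_eq_add,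
      ← sub_eq_add_neg]
  have hinv : (1 + X)⁻¹ʳ * (1 - X)⁻¹ʳ = (1 - X)⁻¹ʳ * (1 + X)⁻¹ʳ :=
    (Commute.ringInverse_ringInverse hcomm).eq
  rw [Unitary.mem_iff, hstar, cayley]
  constructor
  · rw [mul_assoc, ← mul_assoc (1 + X), hcomm, mul_assoc, Ring.mul_inverse_cancel _ hadd, mul_one,
      Ring.inverse_mul_cancel _ hsub]
  · rw [mul_assoc, ← mul_assoc (1 + X)⁻¹ʳ, hinv, mul_assoc, Ring.inverse_mul_cancel _ hadd,
      mul_one, Ring.mul_inverse_cancel _ hsub]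

section CStarRing

variable {R : Type*} [NormedRing R] [StarRing R] [CStarRing R] {X : R}

lemma norm_cayley_le_one (hX : star X = -X) (hadd : IsUnit (1 + X)) (hsub : IsUnit (1 - X)) :
    ‖cayley X‖ ≤ 1 := by
  nontriviality R
  exact (CStarRing.norm_of_mem_unitary (cayley_mem_unitary hX hadd hsub)).le

lemma norm_ringInverse_one_add_le_one [NormedSpace ℝ R] (hX : star X = -X)
    (hadd : IsUnit (1 + X)) (hsub : IsUnit (1 - X)) : ‖(1 + X)⁻¹ʳ‖ ≤ 1 := by
  nontriviality R
  have two_inv : (2 : ℕ) • (1 + X)⁻¹ʳ = 1 + cayley X := by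
    nth_rewrite 2 [← Ring.mul_inverse_cancel _ hadd]
    rw [cayley]
    noncomm_ring
  have : 2 * ‖(1 + X)⁻¹ʳ‖ ≤ 2 :=
    calc 2 * ‖(1 + X)⁻¹ʳ‖ = ‖1 + cayley X‖ := by
          rw [← two_inv, RCLike.norm_nsmul ℝ, nsmul_eq_mul, Nat.cast_ofNat]
      _ ≤ ‖(1 : R)‖ + ‖cayley X‖ := norm_add_le _ _
      _ ≤ 1 + 1 := by rw [CStarRing.norm_one]; gcongr; exact norm_cayley_le_one hX hadd hsub
      _ = 2 := one_add_one_eq_two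
  linarith

theorem norm_cayleyDeriv_sub_cayleyDeriv_le [NormedSpace ℝ R] [HasSummableGeomSeries R]
    [NormOneClass R] {η ν η' ν' : R} (hη : star η = -η) (hν : star ν = -ν) (hη1 : ‖η‖ < 1)
    (hν1 : ‖ν‖ < 1) (hνη : ‖ν‖ + ‖ν - η‖ < 1) {CΦ : ℝ}
    (hCΦ : ‖cayley η - cayley ν‖ ≤ CΦ * ‖η - ν‖) :
    ‖cayleyDeriv η η' - cayleyDeriv ν ν'‖ ≤
      ((1 - ‖ν‖ - ‖ν - η‖)⁻¹ * (‖η'‖ * (1 - ‖η‖)⁻¹ + ‖ν'‖ * (1 - ‖ν‖)⁻¹) + CΦ * ‖ν'‖) * ‖η - ν‖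
        + (1 + (1 - ‖ν‖)⁻¹) * ‖η' - ν'‖ := by
  set c := (1 - ‖ν‖ - ‖ν - η‖)⁻¹
  have hηc : (1 - ‖η‖)⁻¹ ≤ c :=
    inv_anti₀ (by linarith) (by linarith [norm_le_norm_add_norm_sub ν η])
  have hνc : (1 - ‖ν‖)⁻¹ ≤ c := inv_anti₀ (by linarith) (by linarith [norm_nonneg (ν - η)])
  have hA1 := norm_ringInverse_one_add_le_one hη (isUnit_one_add_of_norm_lt_one hη1)
    (isUnit_one_sub_of_norm_lt_one hη1)
  have hB1 := norm_ringInverse_one_add_le_one hν (isUnit_one_add_of_norm_lt_one hν1)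
    (isUnit_one_sub_of_norm_lt_one hν1)
  have hB := norm_ringInverse_one_add_le hν1
  have hAB : ‖(1 + η)⁻¹ʳ - (1 + ν)⁻¹ʳ‖ ≤ (1 - ‖η‖)⁻¹ * ‖η - ν‖ * (1 - ‖ν‖)⁻¹ := by
    have : 0 ≤ (1 - ‖η‖)⁻¹ := inv_nonneg.2 (by linarith)
    grw [norm_ringInverse_one_add_sub_le hη1 hν1, norm_ringInverse_one_add_le hη1, hB]
  have hΦ := norm_cayley_le_one hη (isUnit_one_add_of_norm_lt_one hη1)
    (isUnit_one_sub_of_norm_lt_one hη1)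
  calc _ ≤ _ := norm_cayleyDeriv_sub_le η ν η' ν'
    _ ≤ ‖η' - ν'‖ * 1 + ‖ν'‖ * (c * ‖η - ν‖ * (1 - ‖ν‖)⁻¹)
          + 1 * ‖η'‖ * ((1 - ‖η‖)⁻¹ * ‖η - ν‖ * c) + 1 * ‖η' - ν'‖ * (1 - ‖ν‖)⁻¹
          + CΦ * ‖η - ν‖ * ‖ν'‖ * 1 := by
      gcongr
      · exact hAB.trans (by gcongr)
      · exact hAB.trans (by gcongr)
      · exact mul_nonneg ((norm_nonneg _).trans hCΦ) (norm_nonneg _)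
    _ = _ := by ring

end CStarRing

lemma DCay_eq_cayleyDeriv (X Y : Matrix (Fin 3) (Fin 3) ℝ) : DCay X Y = cayleyDeriv X Y := by
  simp only [DCay, cayleyDeriv, cayley, Matrix.nonsing_inv_eq_ringInverse]

theorem stmt_5_general (η ν ηdot νdot : Matrix (Fin 3) (Fin 3) ℝ)
    (hη : η.transpose = -η) (hν : ν.transpose = -ν)
    (hη1 : ‖η‖ < 1) (hν1 : ‖ν‖ < 1) (hνη : ‖ν‖ + ‖ν - η‖ < 1)
    (CΦ : ℝ) (hCΦ : ‖(1 - η) * (1 + η)⁻¹ - (1 - ν) * (1 + ν)⁻¹‖ ≤ CΦ * ‖η - ν‖) :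
    ‖DCay η ηdot - DCay ν νdot‖ ≤
      ((1 - ‖ν‖ - ‖ν - η‖)⁻¹ *
          (‖ηdot‖ * (1 - ‖η‖)⁻¹ + ‖νdot‖ * (1 - ‖ν‖)⁻¹) + CΦ * ‖νdot‖) * ‖η - ν‖
        + (1 + (1 - ‖ν‖)⁻¹) * ‖ηdot - νdot‖ := by
  have star_eq_neg {X : Matrix (Fin 3) (Fin 3) ℝ} (hX : X.transpose = -X) : star X = -X := by
    rwa [Matrix.star_eq_conjTranspose, Matrix.conjTranspose_eq_transpose_of_trivial]
  rw [DCay_eq_cayleyDeriv, DCay_eq_cayleyDeriv]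
  rw [Matrix.nonsing_inv_eq_ringInverse, Matrix.nonsing_inv_eq_ringInverse] at hCΦ
  exact norm_cayleyDeriv_sub_cayleyDeriv_le (star_eq_neg hη) (star_eq_neg hν) hη1 hν1 hνη hCΦ

/-- Chart conditioning estimate for the derivative of the Cayley transform on `so(3)`:
`‖D_η Cay(η̇) − D_ν Cay(ν̇)‖₂ ≤ C_a ‖η − ν‖₂ + C_b ‖η̇ − ν̇‖₂`, where
`C_b = 1 + (1 − ‖ν‖)⁻¹` and
`C_a = (1 − ‖ν‖ − ‖ν − η‖)⁻¹ (‖η̇‖(1−‖η‖)⁻¹ + ‖ν̇‖(1−‖ν‖)⁻¹) + C_Φ ‖ν̇‖`,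
with `C_Φ` the Lipschitz constant of `Cay` from the chart conditioning estimate. -/
theorem stmt_5 (η ν ηdot νdot : Matrix (Fin 3) (Fin 3) ℝ)
    (hη : η.transpose = -η) (hν : ν.transpose = -ν)
    (hηd : ηdot.transpose = -ηdot) (hνd : νdot.transpose = -νdot)
    (hη1 : ‖η‖ < 1) (hν1 : ‖ν‖ < 1) (hνη : ‖ν‖ + ‖ν - η‖ < 1)
    (CΦ : ℝ) (hCΦ : ‖(1 - η) * (1 + η)⁻¹ - (1 - ν) * (1 + ν)⁻¹‖ ≤ CΦ * ‖η - ν‖) :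
    ‖DCay η ηdot - DCay ν νdot‖ ≤
      ((1 - ‖ν‖ - ‖ν - η‖)⁻¹ *
          (‖ηdot‖ * (1 - ‖η‖)⁻¹ + ‖νdot‖ * (1 - ‖ν‖)⁻¹) + CΦ * ‖νdot‖) * ‖η - ν‖
        + (1 + (1 - ‖ν‖)⁻¹) * ‖ηdot - νdot‖ :=
  stmt_5_general η ν ηdot νdot hη hν hη1 hν1 hνη CΦ hCΦ
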